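/- arXiv:2112.13594 — 2 statements merged into one kernel-verified Lean document; each statement's English description precedes it below -/
import Mathlib

section
/- Fix δ ∈ (0, D], ε > 0 and β > 0. There exists a sequence ε''_n → 0 such that for every n, every x ∈ 𝒳^n, and every conditional distribution P*(x̂|x) achieving R(D−δ, P̂_x) whose induced reconstruction distribution Q(x̂) = Σ_{x∈𝒳} P̂_x(x) P*(x̂|x) satisfies min_{x̂∈𝒳̂} Q(x̂) ≥ β, the set T(x) = { x̂ ∈ 𝒳̂^n : Σ_{i=1}^n log₂ ( P*(x̂_i|x_i) / Q(x̂_i) ) ≤ n [R(D−δ, P̂_x) + ε] } satisfies Σ_{x̂ ∉ T(x)} Π_{i=1}^n P*(x̂_i|x_i) ≤ ε''_n. -/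
open scoped BigOperators Classical
open Filter

section Defs

/-- A probability mass function on a finite alphabet. -/
def IsPMF {α : Type*} [Fintype α] (p : α → ℝ) : Prop :=
  (∀ a, 0 ≤ p a) ∧ ∑ a, p a = 1

/-- A conditional probability mass function (a channel / test channel). -/
def IsCondPMF {α β : Type*} [Fintype α] [Fintype β] (W : α → β → ℝ) : Prop :=
  ∀ a, IsPMF (W a)

/-- Base-2 Kullback–Leibler divergence `D(Q‖P)`. -/
noncomputable def klDiv2 {α : Type*} [Fintype α] (Q P : α → ℝ) : ℝ :=
  ∑ a, Q a * Real.logb 2 (Q a / P a)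

/-- Base-2 mutual information `I(X;X̂)` of the joint law `Q(a) W(b|a)`. -/
noncomputable def mutInf2 {α β : Type*} [Fintype α] [Fintype β]
    (Q : α → ℝ) (W : α → β → ℝ) : ℝ :=
  ∑ a, ∑ b, Q a * W a b * Real.logb 2 (W a b / (∑ a', Q a' * W a' b))

/-- The rate–distortion function `R(D,Q)` (base 2). -/
noncomputable def RD {X Xh : Type*} [Fintype X] [Fintype Xh]
    (d : X → Xh → ℝ) (D : ℝ) (Q : X → ℝ) : ℝ :=
  sInf { r | ∃ V : X → Xh → ℝ, IsCondPMF V ∧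
    (∑ x, ∑ xh, Q x * V x xh * d x xh) ≤ D ∧ r = mutInf2 Q V }

/-- Empirical distribution of a sequence. -/
noncomputable def empDist {X : Type*} [Fintype X] {n : ℕ} (x : Fin n → X) : X → ℝ :=
  fun a => ((Finset.univ.filter (fun i => x i = a)).card : ℝ) / n

/-- Base-2 empirical entropy of a sequence. -/
noncomputable def empEnt {X : Type*} [Fintype X] {n : ℕ} (x : Fin n → X) : ℝ :=
  - ∑ a, empDist x a * Real.logb 2 (empDist x a)

/-- Additive (per-block) distortion between sequences. -/
noncomputable def dSeq {X Xh : Type*} {n : ℕ} (d : X → Xh → ℝ)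
    (x : Fin n → X) (xh : Fin n → Xh) : ℝ :=
  ∑ i, d (x i) (xh i)

/-- The universal guessing distribution `P̃(x̂) ∝ 2^{-n Ĥ_x̂}` on `𝒳̂ⁿ`. -/
noncomputable def univDist {Xh : Type*} [Fintype Xh] {n : ℕ} (xh : Fin n → Xh) : ℝ :=
  (2 : ℝ) ^ (-(n : ℝ) * empEnt xh) / ∑ z : Fin n → Xh, (2 : ℝ) ^ (-(n : ℝ) * empEnt z)

/-- Probability of the distortion ball `S(x)` under the universal distribution. -/
noncomputable def univDistBall {X Xh : Type*} [Fintype Xh] {n : ℕ}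
    (d : X → Xh → ℝ) (D : ℝ) (x : Fin n → X) : ℝ :=
  ∑ xh ∈ Finset.univ.filter (fun xh : Fin n → Xh => dSeq d x xh ≤ (n : ℝ) * D), univDist xh

end Defs

/-! The information densities `ℓᵢ = log₂ (P*(x̂ᵢ|xᵢ) / Q(x̂ᵢ))` are independent under
`∏ᵢ P*(·|xᵢ)`, and since `P*` achieves `R(D-δ, P̂_x)` their means add up to exactly
`n R(D-δ, P̂_x)`. Because `Q ≥ β` and `p log² p ≤ 4` on `[0, 1]`, each `ℓᵢ` has second moment
bounded by a constant `C` depending only on `|𝒳̂|` and `β`, so Chebyshev's inequality bounds the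
probability of `T(x)ᶜ` by `n C / (n ε)² = C / (n ε²)`. -/

lemma mul_log_sq_le_four {t : ℝ} (h0 : 0 ≤ t) (h1 : t ≤ 1) : t * Real.log t ^ 2 ≤ 4 := by
  rcases h0.eq_or_lt with rfl | hpos
  · norm_num
  -- `t log² t = 4 (√t log √t)²` and `|s log s| < 1` on `(0, 1]`.
  have hs : |Real.log √t * √t| < 1 :=
    Real.abs_log_mul_self_lt _ (Real.sqrt_pos.2 hpos) (Real.sqrt_le_one.2 h1)
  have hsq : (Real.log √t * √t) ^ 2 ≤ 1 := ((sq_lt_one_iff_abs_lt_one _).2 hs).le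
  calc t * Real.log t ^ 2 = 4 * (Real.log √t * √t) ^ 2 := by
        rw [Real.log_sqrt h0, mul_pow, Real.sq_sqrt h0]; ring
    _ ≤ 4 := by linarith

lemma mul_log_div_sq_le {p q β : ℝ} (hp0 : 0 ≤ p) (hp1 : p ≤ 1) (hβ : 0 < β) (hβq : β ≤ q)
    (hq1 : q ≤ 1) : p * Real.log (p / q) ^ 2 ≤ 8 + 2 * Real.log β ^ 2 := by
  rcases hp0.eq_or_lt with rfl | hpos
  · rw [zero_mul]; positivity
  have hq : 0 < q := hβ.trans_le hβq
  have hlogq : Real.log q ^ 2 ≤ Real.log β ^ 2 := by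
    have hlog_le : Real.log β ≤ Real.log q := Real.log_le_log hβ hβq
    have hlog_nonpos : Real.log q ≤ 0 := Real.log_nonpos hq.le hq1
    nlinarith
  have hlogp := mul_log_sq_le_four hp0 hp1
  rw [Real.log_div hpos.ne' hq.ne']
  nlinarith [sq_nonneg (Real.log p + Real.log q), mul_le_mul_of_nonneg_left hlogq hp0]

namespace IsPMF

variable {α : Type*} [Fintype α] {p : α → ℝ}

lemma le_one (hp : IsPMF p) (a : α) : p a ≤ 1 :=
  hp.2 ▸ Finset.single_le_sum (fun b _ => hp.1 b) (Finset.mem_univ a)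

lemma sum_mul_sub_mean_sq_le (hp : IsPMF p) (f : α → ℝ) :
    ∑ a, p a * (f a - ∑ b, p b * f b) ^ 2 ≤ ∑ a, p a * f a ^ 2 := by
  set m := ∑ b, p b * f b
  have hvar : ∑ a, p a * (f a - m) ^ 2 = ∑ a, p a * f a ^ 2 - m ^ 2 := by
    calc ∑ a, p a * (f a - m) ^ 2 = ∑ a, (p a * f a ^ 2 - 2 * m * (p a * f a) + m ^ 2 * p a) :=
          Finset.sum_congr rfl fun a _ => by ring
      _ = ∑ a, p a * f a ^ 2 - m ^ 2 := by
          rw [Finset.sum_add_distrib, Finset.sum_sub_distrib, ← Finset.mul_sum, ← Finset.mul_sum,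
            hp.2]
          ring
  rw [hvar]
  nlinarith [sq_nonneg m]

lemma sum_mul_condPMF {β : Type*} [Fintype β] (hp : IsPMF p) {W : α → β → ℝ}
    (hW : IsCondPMF W) : IsPMF (fun b => ∑ a, p a * W a b) := by
  refine ⟨fun b => Finset.sum_nonneg fun a _ => mul_nonneg (hp.1 a) ((hW a).1 b), ?_⟩
  rw [Finset.sum_comm]
  simp only [← Finset.mul_sum, (hW _).2, mul_one, hp.2]

end IsPMF

section ProductWeights

variable {n : ℕ} {β : Type*} [Fintype β] (p : Fin n → β → ℝ)

lemma sum_pi_prod_mul_mul (f : Fin n → β → ℝ) (i j : Fin n) :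
    ∑ ω : Fin n → β, (∏ k, p k (ω k)) * f i (ω i) * f j (ω j)
      = ∏ k, ∑ b, p k b * (if k = i then f i b else 1) * (if k = j then f j b else 1) := by
  rw [Fintype.prod_sum]
  refine Finset.sum_congr rfl fun ω _ => ?_
  simp only [Finset.prod_mul_distrib, Finset.prod_ite_eq', Finset.mem_univ, if_true]

variable {p}

/-- Variances of independent coordinates add up. -/
lemma sum_pi_prod_mul_sum_sq (hp : ∀ i, ∑ b, p i b = 1) (f : Fin n → β → ℝ)
    (hmean : ∀ i, ∑ b, p i b * f i b = 0) :
    ∑ ω : Fin n → β, (∏ k, p k (ω k)) * (∑ i, f i (ω i)) ^ 2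
      = ∑ i, ∑ b, p i b * f i b ^ 2 := by
  have hcross : ∀ i j, ∑ ω : Fin n → β, (∏ k, p k (ω k)) * f i (ω i) * f j (ω j)
      = if j = i then ∑ b, p i b * f i b ^ 2 else 0 := by
    intro i j
    rw [sum_pi_prod_mul_mul]
    split_ifs with hji
    · subst hji
      rw [Finset.prod_eq_single_of_mem j (Finset.mem_univ j) fun k _ hk => by simpa [hk] using hp k]
      simp [sq, mul_assoc]
    · exact Finset.prod_eq_zero (Finset.mem_univ j) (by simpa [hji] using hmean j)
  calc ∑ ω : Fin n → β, (∏ k, p k (ω k)) * (∑ i, f i (ω i)) ^ 2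
      = ∑ i, ∑ j, ∑ ω : Fin n → β, (∏ k, p k (ω k)) * f i (ω i) * f j (ω j) := by
        have hexpand : ∀ ω : Fin n → β, (∏ k, p k (ω k)) * (∑ i, f i (ω i)) ^ 2
            = ∑ i, ∑ j, (∏ k, p k (ω k)) * f i (ω i) * f j (ω j) := fun ω => by
          rw [sq, Finset.sum_mul_sum, Finset.mul_sum]
          simp only [Finset.mul_sum, mul_assoc]
        rw [Finset.sum_congr rfl fun ω _ => hexpand ω, Finset.sum_comm]
        exact Finset.sum_congr rfl fun i _ => Finset.sum_comm
    _ = ∑ i, ∑ b, p i b * f i b ^ 2 := by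
        simp only [hcross, Finset.sum_ite_eq', Finset.mem_univ, if_true]

end ProductWeights

lemma sum_filter_lt_le_div_sq {Ω : Type*} [Fintype Ω] {w S : Ω → ℝ} (hw : ∀ ω, 0 ≤ w ω)
    {t : ℝ} (ht : 0 < t) :
    ∑ ω ∈ Finset.univ.filter (fun ω => t < S ω), w ω ≤ (∑ ω, w ω * S ω ^ 2) / t ^ 2 := by
  rw [le_div_iff₀ (by positivity), Finset.sum_mul]
  calc ∑ ω ∈ Finset.univ.filter (fun ω => t < S ω), w ω * t ^ 2
      ≤ ∑ ω ∈ Finset.univ.filter (fun ω => t < S ω), w ω * S ω ^ 2 :=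
        Finset.sum_le_sum fun ω hω => mul_le_mul_of_nonneg_left
          (pow_le_pow_left₀ ht.le (Finset.mem_filter.1 hω).2.le 2) (hw ω)
    _ ≤ ∑ ω, w ω * S ω ^ 2 :=
        Finset.sum_le_sum_of_subset_of_nonneg (Finset.filter_subset _ _)
          fun ω _ _ => mul_nonneg (hw ω) (sq_nonneg _)

/-- Chebyshev's inequality for a sum of independent coordinates. -/
lemma sum_filter_lt_sum_sub_mean_le {n : ℕ} {β : Type*} [Fintype β] {p : Fin n → β → ℝ}
    (hp : ∀ i, IsPMF (p i)) (f : Fin n → β → ℝ) {C : ℝ} (hC : ∀ i, ∑ b, p i b * f i b ^ 2 ≤ C)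
    {t : ℝ} (ht : 0 < t) :
    ∑ ω ∈ Finset.univ.filter (fun ω : Fin n → β => t < ∑ i, (f i (ω i) - ∑ b, p i b * f i b)),
      ∏ i, p i (ω i) ≤ n * C / t ^ 2 := by
  have hmean : ∀ i, ∑ b, p i b * (f i b - ∑ b', p i b' * f i b') = 0 := fun i => by
    simp only [mul_sub, Finset.sum_sub_distrib, ← Finset.sum_mul, (hp i).2, one_mul, sub_self]
  refine (sum_filter_lt_le_div_sq (fun ω => Finset.prod_nonneg fun k _ => (hp k).1 _) ht).trans ?_
  rw [sum_pi_prod_mul_sum_sq (fun i => (hp i).2) _ hmean]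
  gcongr
  calc ∑ i, ∑ b, p i b * (f i b - ∑ b', p i b' * f i b') ^ 2 ≤ ∑ _i : Fin n, C :=
        Finset.sum_le_sum fun i _ => ((hp i).sum_mul_sub_mean_sq_le _).trans (hC i)
    _ = n * C := by simp

lemma sum_comp_eq_mul_sum_empDist {X : Type*} [Fintype X] {n : ℕ} (x : Fin n → X)
    (h : X → ℝ) : ∑ i, h (x i) = n * ∑ a, empDist x a * h a := by
  rcases n.eq_zero_or_pos with rfl | hn
  · simp
  rw [← Finset.sum_fiberwise Finset.univ x (fun i => h (x i)), Finset.mul_sum]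
  refine Finset.sum_congr rfl fun a _ => ?_
  rw [Finset.sum_congr rfl fun i hi => by rw [(Finset.mem_filter.1 hi).2], Finset.sum_const,
    nsmul_eq_mul, empDist]
  field_simp

lemma isPMF_empDist {X : Type*} [Fintype X] {n : ℕ} (hn : 0 < n) (x : Fin n → X) :
    IsPMF (empDist x) := by
  refine ⟨fun a => by unfold empDist; positivity, ?_⟩
  have h := sum_comp_eq_mul_sum_empDist x fun _ => 1
  simp only [Finset.sum_const, Finset.card_univ, Fintype.card_fin, nsmul_eq_mul, mul_one] at h
  exact (mul_eq_left₀ (by exact_mod_cast hn.ne')).1 h.symm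

lemma mutInf2_eq_sum_mul_sum {α β : Type*} [Fintype α] [Fintype β] (Q : α → ℝ)
    (W : α → β → ℝ) :
    mutInf2 Q W = ∑ a, Q a * ∑ b, W a b * Real.logb 2 (W a b / ∑ a', Q a' * W a' b) := by
  simp only [mutInf2, Finset.mul_sum, mul_assoc]

lemma sum_mul_logb_div_sq_le {β : Type*} [Fintype β] {p q : β → ℝ} (hp : IsPMF p)
    (hq : IsPMF q) {γ : ℝ} (hγ : 0 < γ) (hγq : ∀ b, γ ≤ q b) :
    ∑ b, p b * Real.logb 2 (p b / q b) ^ 2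
      ≤ Fintype.card β * ((8 + 2 * Real.log γ ^ 2) / Real.log 2 ^ 2) := by
  calc ∑ b, p b * Real.logb 2 (p b / q b) ^ 2
      = ∑ b, p b * Real.log (p b / q b) ^ 2 / Real.log 2 ^ 2 := by
        simp only [Real.logb, div_pow, mul_div_assoc]
    _ ≤ ∑ _b : β, (8 + 2 * Real.log γ ^ 2) / Real.log 2 ^ 2 :=
        Finset.sum_le_sum fun b _ => div_le_div_of_nonneg_right
          (mul_log_div_sq_le (hp.1 b) (hp.le_one b) hγ (hγq b) (hq.le_one b)) (sq_nonneg _)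
    _ = _ := by simp

theorem typical_set_complement_upper_bound_general
    {X Xh : Type*} [Fintype X] [Fintype Xh]
    (d : X → Xh → ℝ) (D : ℝ)
    (δ : ℝ) (ε : ℝ) (hε : 0 < ε) (β : ℝ) (hβ : 0 < β) :
    ∃ εseq : ℕ → ℝ, Tendsto εseq atTop (nhds 0) ∧
      ∀ (n : ℕ) (x : Fin n → X) (Pstar : X → Xh → ℝ),
        IsCondPMF Pstar →
        (∑ a, ∑ b, empDist x a * Pstar a b * d a b) ≤ D - δ →
        mutInf2 (empDist x) Pstar = RD d (D - δ) (empDist x) →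
        (∀ b : Xh, β ≤ ∑ a, empDist x a * Pstar a b) →
        (∑ xh ∈ Finset.univ.filter (fun xh : Fin n → Xh =>
            ¬ ((∑ i, Real.logb 2
                  (Pstar (x i) (xh i) / (∑ a, empDist x a * Pstar a (xh i)))) ≤
                (n : ℝ) * (RD d (D - δ) (empDist x) + ε))),
          ∏ i, Pstar (x i) (xh i)) ≤ εseq n := by
  set C := Fintype.card Xh * ((8 + 2 * Real.log β ^ 2) / Real.log 2 ^ 2)
  refine ⟨fun n => C / ε ^ 2 * (n : ℝ)⁻¹,
    by simpa using tendsto_inv_atTop_nhds_zero_nat.const_mul (C / ε ^ 2), ?_⟩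
  intro n x P hP _ hR hβQ
  rcases n.eq_zero_or_pos with rfl | hn
  · simp
  set Q := fun b => ∑ a, empDist x a * P a b
  have hQ : IsPMF Q := (isPMF_empDist hn x).sum_mul_condPMF hP
  set ℓ : Fin n → Xh → ℝ := fun i b => Real.logb 2 (P (x i) b / Q b)
  have hmean : ∑ i, ∑ b, P (x i) b * ℓ i b = n * RD d (D - δ) (empDist x) := by
    rw [← hR, mutInf2_eq_sum_mul_sum]
    exact sum_comp_eq_mul_sum_empDist x fun a => ∑ b, P a b * Real.logb 2 (P a b / Q b)
  have hset : Finset.univ.filter (fun xh : Fin n → Xh =>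
        ¬ (∑ i, ℓ i (xh i) ≤ n * (RD d (D - δ) (empDist x) + ε)))
      = Finset.univ.filter (fun xh : Fin n → Xh =>
        n * ε < ∑ i, (ℓ i (xh i) - ∑ b, P (x i) b * ℓ i b)) := by
    refine Finset.filter_congr fun xh _ => ?_
    rw [Finset.sum_sub_distrib, hmean]
    constructor <;> intro h <;> linarith
  refine (hset ▸ sum_filter_lt_sum_sub_mean_le (fun i => hP (x i)) ℓ
    (fun i => sum_mul_logb_div_sq_le (hP (x i)) hQ hβ hβQ) (by positivity)).trans_eq ?_
  show (n : ℝ) * C / ((n : ℝ) * ε) ^ 2 = C / ε ^ 2 * (n : ℝ)⁻¹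
  have hn_ne : (n : ℝ) ≠ 0 := by positivity
  field_simp

/-- Fix `δ ∈ (0,D]`, `ε > 0` and `β > 0`. There is a sequence `ε''_n → 0`
such that for every `n`, every `x ∈ 𝒳ⁿ`, and every conditional distribution `P*` achieving
`R(D−δ, P̂_x)` whose induced reconstruction distribution `Q(x̂) = Σ_x P̂_x(x)P*(x̂|x)` satisfies
`min_x̂ Q(x̂) ≥ β`, the complement of
`T(x) = {x̂ : Σᵢ log₂(P*(x̂ᵢ|xᵢ)/Q(x̂ᵢ)) ≤ n[R(D−δ,P̂_x)+ε]}` has conditional probability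
`Σ_{x̂ ∉ T(x)} Πᵢ P*(x̂ᵢ|xᵢ) ≤ ε''_n`. -/
theorem typical_set_complement_upper_bound
    {X Xh : Type*} [Fintype X] [Fintype Xh]
    (d : X → Xh → ℝ) (hd : ∀ x xh, 0 ≤ d x xh) (D : ℝ)
    (δ : ℝ) (hδ : 0 < δ) (hδD : δ ≤ D) (ε : ℝ) (hε : 0 < ε) (β : ℝ) (hβ : 0 < β) :
    ∃ εseq : ℕ → ℝ, Tendsto εseq atTop (nhds 0) ∧
      ∀ (n : ℕ) (x : Fin n → X) (Pstar : X → Xh → ℝ),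
        IsCondPMF Pstar →
        (∑ a, ∑ b, empDist x a * Pstar a b * d a b) ≤ D - δ →
        mutInf2 (empDist x) Pstar = RD d (D - δ) (empDist x) →
        (∀ b : Xh, β ≤ ∑ a, empDist x a * Pstar a b) →
        (∑ xh ∈ Finset.univ.filter (fun xh : Fin n → Xh =>
            ¬ ((∑ i, Real.logb 2
                  (Pstar (x i) (xh i) / (∑ a, empDist x a * Pstar a (xh i)))) ≤
                (n : ℝ) * (RD d (D - δ) (empDist x) + ε))),
          ∏ i, Pstar (x i) (xh i)) ≤ εseq n :=
  typical_set_complement_upper_bound_general d D δ ε hε β hβ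
end

section
/- Assume for every x ∈ 𝒳 there exists x̂ ∈ 𝒳̂ with d(x,x̂) = 0, fix K ≥ 1 and δ > 0, and let c(δ) = ( Σ_{i=1}^∞ i^{−(1+δ)} )^{−1}. Then for every probability distribution Q^K on 𝒳^K and every guessing function G for block length K: Σ_{x∈𝒳^K} Q^K(x) log₂ G(x) ≥ ( R_K(D,Q^K) − 1 + log₂ c(δ) ) / (1+δ). -/
open scoped BigOperators Classical
open Filter

/-- The guessing function induced by an ordering of `𝒳̂ⁿ` (given as a bijection `e` of `𝒳̂ⁿ`
with initial segment positions): `G(x)` is the smallest (1-based) position of a guess within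
distortion `nD` of `x`. -/
noncomputable def guessOf {X Xh : Type*} [Fintype Xh] {n : ℕ} (d : X → Xh → ℝ) (D : ℝ)
    (e : (Fin n → Xh) ≃ Fin (Fintype.card (Fin n → Xh))) (x : Fin n → X) : ℕ :=
  sInf {j : ℕ | ∃ xh : Fin n → Xh, dSeq d x xh ≤ (n : ℝ) * D ∧ j = (e xh : ℕ) + 1}

/-! Let `f x` be the first guess in the ordering within distortion `K D` of `x`; it exists because
every letter has a zero-distortion reproduction, and `G x` is one more than its rank. The
deterministic test channel `x ↦ f x` meets the distortion constraint, so `R_K(D, Q^K)` is at most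
its mutual information, which is the entropy of `f X`. Gibbs' inequality against the
sub-probability `c(δ) (rank + 1)^{-(1+δ)}` bounds that entropy by
`(1 + δ) E log₂ G(X) - log₂ c(δ)`. -/

open Real

section Gibbs

variable {α : Type*} [Fintype α]

theorem sub_div_log_two_le_mul_logb_div {p q : ℝ} (hq : 0 ≤ q) (hp : 0 ≤ p)
    (hpq : p = 0 → q = 0) : (q - p) / log 2 ≤ q * logb 2 (q / p) := by
  rcases hq.eq_or_lt with rfl | hq
  · rw [zero_sub, zero_mul, neg_div, neg_nonpos]
    exact div_nonneg hp (log_nonneg one_le_two)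
  have hp : 0 < p := hp.lt_of_ne' (mt hpq hq.ne')
  have hlog := one_sub_inv_le_log_of_pos (div_pos hq hp)
  rw [inv_div] at hlog
  rw [logb, mul_div_assoc', div_le_div_iff_of_pos_right (log_pos one_lt_two)]
  calc q - p = q * (1 - p / q) := by field_simp
    _ ≤ q * log (q / p) := mul_le_mul_of_nonneg_left hlog hq.le

theorem klDiv2_nonneg {Q P : α → ℝ} (hQ : ∀ a, 0 ≤ Q a) (hP : ∀ a, 0 ≤ P a)
    (hPQ : ∀ a, P a = 0 → Q a = 0) (hsum : ∑ a, P a ≤ ∑ a, Q a) : 0 ≤ klDiv2 Q P :=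
  calc 0 ≤ ∑ a, (Q a - P a) / log 2 := by
        rw [← Finset.sum_div, Finset.sum_sub_distrib]
        exact div_nonneg (sub_nonneg.2 hsum) (log_nonneg one_le_two)
    _ ≤ klDiv2 Q P :=
        Finset.sum_le_sum fun a _ => sub_div_log_two_le_mul_logb_div (hQ a) (hP a) (hPQ a)

theorem sum_mul_logb_inv_le {Q P : α → ℝ} (hQ : ∀ a, 0 ≤ Q a) (hP : ∀ a, 0 < P a)
    (hsum : ∑ a, P a ≤ ∑ a, Q a) :
    ∑ a, Q a * logb 2 (Q a)⁻¹ ≤ ∑ a, Q a * logb 2 (P a)⁻¹ := by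
  have hkl := klDiv2_nonneg hQ (fun a => (hP a).le) (fun a h => absurd h (hP a).ne') hsum
  unfold klDiv2 at hkl
  rw [← sub_nonneg, ← Finset.sum_sub_distrib]
  convert hkl using 2 with a
  rcases (hQ a).eq_or_lt with h | h
  · simp [← h]
  · rw [logb_div h.ne' (hP a).ne', logb_inv, logb_inv]
    ring

end Gibbs

section Channels

variable {α β : Type*} [Fintype β]

noncomputable def detChannel (f : α → β) : α → β → ℝ :=
  fun a b => if b = f a then 1 else 0

theorem sum_detChannel_mul (f : α → β) (a : α) (g : β → ℝ) :
    ∑ b, detChannel f a b * g b = g (f a) := by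
  simp [detChannel]

variable [Fintype α]

noncomputable def marginal (Q : α → ℝ) (W : α → β → ℝ) (b : β) : ℝ :=
  ∑ a, Q a * W a b

theorem IsPMF.marginal {Q : α → ℝ} {W : α → β → ℝ} (hQ : IsPMF Q) (hW : IsCondPMF W) :
    IsPMF (marginal Q W) := by
  refine ⟨fun b => Finset.sum_nonneg fun a _ => mul_nonneg (hQ.1 a) ((hW a).1 b), ?_⟩
  rw [← hQ.2]
  simp only [_root_.marginal]
  rw [Finset.sum_comm]
  simp only [← Finset.mul_sum, (hW _).2, mul_one]

theorem mutInf2_eq_klDiv2 (Q : α → ℝ) (W : α → β → ℝ) :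
    mutInf2 Q W = klDiv2 (fun p : α × β => Q p.1 * W p.1 p.2)
      (fun p => Q p.1 * marginal Q W p.2) := by
  unfold mutInf2 klDiv2
  rw [Fintype.sum_prod_type]
  refine Finset.sum_congr rfl fun a _ => Finset.sum_congr rfl fun b _ => ?_
  by_cases hQ : Q a = 0
  · simp [hQ]
  · rw [mul_div_mul_left _ _ hQ]
    rfl

theorem mutInf2_nonneg {Q : α → ℝ} {W : α → β → ℝ} (hQ : IsPMF Q) (hW : IsCondPMF W) :
    0 ≤ mutInf2 Q W := by
  have hm := hQ.marginal hW
  rw [mutInf2_eq_klDiv2]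
  refine klDiv2_nonneg (fun p => mul_nonneg (hQ.1 _) ((hW _).1 _))
    (fun p => mul_nonneg (hQ.1 _) (hm.1 _)) ?_ ?_
  · rintro ⟨a, b⟩ h
    rcases mul_eq_zero.1 h with h | h
    · simp [h]
    · exact (Finset.sum_eq_zero_iff_of_nonneg fun a _ => mul_nonneg (hQ.1 a) ((hW a).1 b)).1 h
        a (Finset.mem_univ a)
  · simp only [Fintype.sum_prod_type, ← Finset.mul_sum, hm.2, (hW _).2, le_refl]

theorem isCondPMF_detChannel (f : α → β) : IsCondPMF (detChannel f) :=
  fun a => ⟨fun b => by unfold detChannel; split_ifs <;> norm_num, by simp [detChannel]⟩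

theorem sum_marginal_detChannel_mul (Q : α → ℝ) (f : α → β) (g : β → ℝ) :
    ∑ b, marginal Q (detChannel f) b * g b = ∑ a, Q a * g (f a) := by
  simp only [marginal, Finset.sum_mul]
  rw [Finset.sum_comm]
  simp only [mul_assoc, ← Finset.mul_sum, sum_detChannel_mul]

theorem mutInf2_detChannel (Q : α → ℝ) (f : α → β) :
    mutInf2 Q (detChannel f) =
      ∑ b, marginal Q (detChannel f) b * logb 2 (marginal Q (detChannel f) b)⁻¹ := by
  rw [sum_marginal_detChannel_mul]
  refine Finset.sum_congr rfl fun a _ => ?_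
  simp [detChannel, marginal]

theorem expected_cost_detChannel_le {Q : α → ℝ} (hQ : IsPMF Q) {f : α → β} {c : α → β → ℝ}
    {D : ℝ} (hc : ∀ a, c a (f a) ≤ D) : ∑ a, ∑ b, Q a * detChannel f a b * c a b ≤ D := by
  simp only [mul_assoc, ← Finset.mul_sum, sum_detChannel_mul]
  calc ∑ a, Q a * c a (f a) ≤ ∑ a, Q a * D :=
        Finset.sum_le_sum fun a _ => mul_le_mul_of_nonneg_left (hc a) (hQ.1 a)
    _ = D := by rw [← Finset.sum_mul, hQ.2, one_mul]

end Channels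

section RateDistortion

variable {X Xh : Type*} [Fintype X] [Fintype Xh] {d : X → Xh → ℝ} {D : ℝ} {Q : X → ℝ}

theorem RD_le_mutInf2 (hQ : IsPMF Q) {V : X → Xh → ℝ} (hV : IsCondPMF V)
    (hdist : ∑ x, ∑ xh, Q x * V x xh * d x xh ≤ D) : RD d D Q ≤ mutInf2 Q V :=
  csInf_le ⟨0, by rintro r ⟨V', hV', -, rfl⟩; exact mutInf2_nonneg hQ hV'⟩ ⟨V, hV, hdist, rfl⟩

theorem RD_eq_zero_of_neg (hd : ∀ x xh, 0 ≤ d x xh) (hQ : ∀ x, 0 ≤ Q x) (hD : D < 0) :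
    RD d D Q = 0 := by
  unfold RD
  convert Real.sInf_empty
  refine Set.eq_empty_of_forall_notMem ?_
  rintro r ⟨V, hV, hdist, -⟩
  have : 0 ≤ ∑ x, ∑ xh, Q x * V x xh * d x xh := Finset.sum_nonneg fun x _ =>
    Finset.sum_nonneg fun xh _ => mul_nonneg (mul_nonneg (hQ x) ((hV x).1 xh)) (hd x xh)
  linarith

end RateDistortion

section Guessing

theorem summable_succ_rpow_neg {s : ℝ} (hs : 1 < s) :
    Summable fun i : ℕ => ((i : ℝ) + 1) ^ (-s) := by
  simpa using (summable_nat_add_iff 1).2 (summable_nat_rpow.2 (by linarith : -s < -1))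

theorem one_le_tsum_succ_rpow_neg {s : ℝ} (hs : 1 < s) :
    1 ≤ ∑' i : ℕ, ((i : ℝ) + 1) ^ (-s) := by
  simpa using (summable_succ_rpow_neg hs).le_tsum 0 fun j _ => by positivity

theorem sum_mul_logb_inv_le_of_injective {B : Type*} [Fintype B] {P : B → ℝ} (hP : IsPMF P)
    {r : B → ℕ} (hr : Function.Injective r) {s : ℝ} (hs : 1 < s) :
    ∑ b, P b * logb 2 (P b)⁻¹ ≤
      s * ∑ b, P b * logb 2 ((r b : ℝ) + 1) + logb 2 (∑' i : ℕ, ((i : ℝ) + 1) ^ (-s)) := by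
  set Z := ∑' i : ℕ, ((i : ℝ) + 1) ^ (-s)
  have hZ : 0 < Z := one_pos.trans_le (one_le_tsum_succ_rpow_neg hs)
  have hweights : ∑ b, ((r b : ℝ) + 1) ^ (-s) / Z ≤ ∑ b, P b := by
    rw [hP.2, ← Finset.sum_div, div_le_one hZ]
    calc ∑ b, ((r b : ℝ) + 1) ^ (-s) = ∑' b, ((r b : ℝ) + 1) ^ (-s) := (tsum_fintype _).symm
      _ ≤ Z := tsum_comp_le_tsum_of_inj (summable_succ_rpow_neg hs) (fun i => by positivity) hr
  have hlog : ∀ b, logb 2 (((r b : ℝ) + 1) ^ (-s) / Z)⁻¹ = s * logb 2 ((r b : ℝ) + 1) + logb 2 Z := by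
    intro b
    rw [inv_div, logb_div hZ.ne' (by positivity), logb_rpow_eq_mul_logb_of_pos (by positivity)]
    ring
  calc ∑ b, P b * logb 2 (P b)⁻¹ ≤ ∑ b, P b * logb 2 (((r b : ℝ) + 1) ^ (-s) / Z)⁻¹ :=
        sum_mul_logb_inv_le hP.1 (fun b => by positivity) hweights
    _ = ∑ b, (s * (P b * logb 2 ((r b : ℝ) + 1)) + P b * logb 2 Z) :=
        Finset.sum_congr rfl fun b _ => by rw [hlog]; ring
    _ = _ := by rw [Finset.sum_add_distrib, ← Finset.mul_sum, ← Finset.sum_mul, hP.2, one_mul]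

theorem exists_guessOf_eq {X Xh : Type*} [Fintype Xh] {n : ℕ} (d : X → Xh → ℝ) (D : ℝ)
    (e : (Fin n → Xh) ≃ Fin (Fintype.card (Fin n → Xh))) (x : Fin n → X)
    (h : ∃ xh, dSeq d x xh ≤ (n : ℝ) * D) :
    ∃ xh, dSeq d x xh ≤ (n : ℝ) * D ∧ guessOf d D e x = (e xh : ℕ) + 1 := by
  obtain ⟨xh, hxh⟩ := h
  exact Nat.sInf_mem (s := {j | ∃ xh, dSeq d x xh ≤ (n : ℝ) * D ∧ j = (e xh : ℕ) + 1})
    ⟨_, xh, hxh, rfl⟩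

end Guessing

theorem expected_log_guesswork_lower_bound_general
    {X Xh : Type*} [Fintype X] [Fintype Xh]
    (d : X → Xh → ℝ) (hd : ∀ x xh, 0 ≤ d x xh) (D : ℝ)
    (hcover : ∀ x : X, ∃ xh : Xh, d x xh = 0)
    (K : ℕ) (δ : ℝ) (hδ : 0 < δ)
    (QK : (Fin K → X) → ℝ) (hQK : IsPMF QK)
    (e : (Fin K → Xh) ≃ Fin (Fintype.card (Fin K → Xh))) :
    (RD (dSeq d) ((K : ℝ) * D) QK - 1 +
        Real.logb 2 (∑' i : ℕ, ((i : ℝ) + 1) ^ (-(1 + δ)))⁻¹) / (1 + δ) ≤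
      ∑ x : Fin K → X, QK x * Real.logb 2 (guessOf d D e x) := by
  have hs : 1 < 1 + δ := by linarith
  have hlogZ := logb_nonneg one_lt_two (one_le_tsum_succ_rpow_neg hs)
  rw [logb_inv, div_le_iff₀ (by linarith)]
  rcases lt_or_ge ((K : ℝ) * D) 0 with hD | hD
  · have hG : 0 ≤ ∑ x, QK x * logb 2 (guessOf d D e x) := Finset.sum_nonneg fun x _ =>
      mul_nonneg (hQK.1 x) (div_nonneg (log_natCast_nonneg _) (log_nonneg one_le_two))
    rw [RD_eq_zero_of_neg (d := dSeq d) (fun _ _ => Finset.sum_nonneg fun i _ => hd _ _) hQK.1 hD]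
    nlinarith
  choose g hg using hcover
  have hreach : ∀ x : Fin K → X, ∃ xh, dSeq d x xh ≤ K * D :=
    fun x => ⟨fun i => g (x i), by simpa [dSeq, hg] using hD⟩
  choose f hfd hfG using fun x => exists_guessOf_eq d D e x (hreach x)
  have hRD := calc
    RD (dSeq d) (K * D) QK ≤ mutInf2 QK (detChannel f) :=
        RD_le_mutInf2 hQK (isCondPMF_detChannel f) (expected_cost_detChannel_le hQK hfd)
    _ = ∑ b, marginal QK (detChannel f) b * logb 2 (marginal QK (detChannel f) b)⁻¹ :=
        mutInf2_detChannel QK f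
    _ ≤ (1 + δ) * ∑ b, marginal QK (detChannel f) b * logb 2 ((e b : ℕ) + 1 : ℝ) +
          logb 2 (∑' i : ℕ, ((i : ℝ) + 1) ^ (-(1 + δ))) :=
        sum_mul_logb_inv_le_of_injective (hQK.marginal (isCondPMF_detChannel f))
          (Fin.val_injective.comp e.injective) hs
    _ = (1 + δ) * ∑ x, QK x * logb 2 (guessOf d D e x) +
          logb 2 (∑' i : ℕ, ((i : ℝ) + 1) ^ (-(1 + δ))) := by
        simp [sum_marginal_detChannel_mul, hfG]
  linarith

/-- For any distribution `Q^K` on `𝒳^K`, any guessing function `G` for block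
length `K` (induced by an ordering of `𝒳̂^K`) and any `δ > 0`, with
`c(δ) = (Σ_{i≥1} i^{−(1+δ)})⁻¹`:
`Σ_x Q^K(x) log₂ G(x) ≥ (R_K(D,Q^K) − 1 + log₂ c(δ))/(1+δ)`. -/
theorem expected_log_guesswork_lower_bound
    {X Xh : Type*} [Fintype X] [Fintype Xh]
    (d : X → Xh → ℝ) (hd : ∀ x xh, 0 ≤ d x xh) (D : ℝ)
    (hcover : ∀ x : X, ∃ xh : Xh, d x xh = 0)
    (K : ℕ) (hK : 0 < K) (δ : ℝ) (hδ : 0 < δ)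
    (QK : (Fin K → X) → ℝ) (hQK : IsPMF QK)
    (e : (Fin K → Xh) ≃ Fin (Fintype.card (Fin K → Xh))) :
    (RD (dSeq d) ((K : ℝ) * D) QK - 1 +
        Real.logb 2 (∑' i : ℕ, ((i : ℝ) + 1) ^ (-(1 + δ)))⁻¹) / (1 + δ) ≤
      ∑ x : Fin K → X, QK x * Real.logb 2 (guessOf d D e x) :=
  expected_log_guesswork_lower_bound_general d hd D hcover K δ hδ QK hQK e
end
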